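/- arXiv:math/0107194 — 2 statements merged into one kernel-verified Lean document; each statement's English description precedes it below -/
import Mathlib

section
/- Let A = (a_{ij})_{0≤i,j≤n} be a matrix over a noncommutative ring R such that all needed quasideterminants of submatrices are defined and invertible. Then the (0,0)-quasideterminant satisfies the expansion |A|₀₀ = a₀₀ - ∑_{i=1}^n |A^{i0}|_{0i} · (|A^{00}|_{ii})⁻¹ · a_{i0}, where A^{ij} denotes the matrix obtained from A by deleting the i-th row and j-th column. -/
/-!
Put `s = a₀ N⁻¹`, where `a₀` is row `0` of `A` without its first entry and `N = A^{00}`.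
Multiplying `A` on the left by the row `(1, -s)` kills every column but the first, so
`(a₀₀ - s · a^{(0)}) B₀₀ = 1`, i.e. `|A|₀₀ = a₀₀ - ∑ₖ sₖ a_{k0}`.

For the coefficients: row `m ≠ 0` of `A^{k0}` times column `k` of `N⁻¹` vanishes, being a row of
`N` other than row `k`, while row `0` gives `sₖ`. Hence column `k` of `N⁻¹` is `(A^{k0})⁻¹` applied
to `sₖ e₀`, and its `k`-th entry is the homological relation `(N⁻¹)ₖₖ = (|A^{k0}|₀ₖ)⁻¹ sₖ`.
-/

theorem Fin.comp_succAbove_succ_eq_single {M : Type*} [Zero M] {n : ℕ} {f : Fin (n + 1) → M}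
    {k : Fin n} (hf : ∀ t, t ≠ k → f t.succ = 0) :
    f ∘ k.succ.succAbove = Pi.single ⟨0, k.pos⟩ (f 0) := by
  obtain ⟨n, rfl⟩ := Nat.exists_eq_succ_of_ne_zero k.pos.ne'
  ext m
  induction m using Fin.cases with
  | zero => simp
  | succ m => simp [Fin.succ_succAbove_succ, hf _ (Fin.succAbove_ne k m)]

namespace Matrix

variable {R : Type*} [Ring R]

theorem schur_mul_apply_zero_zero_eq_one {m n : ℕ} (A : Matrix (Fin (m + 1)) (Fin (n + 1)) R)
    (B : Matrix (Fin (n + 1)) (Fin (m + 1)) R) (hAB : A * B = 1) (s : Fin m → R)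
    (hs : s ᵥ* A.submatrix Fin.succ Fin.succ = fun j => A 0 j.succ) :
    (A 0 0 - s ⬝ᵥ fun k => A k.succ 0) * B 0 0 = 1 := by
  set v : Fin (m + 1) → R := Fin.cons 1 (-s)
  have hvA : v ᵥ* A = Pi.single 0 (A 0 0 - s ⬝ᵥ fun k => A k.succ 0) := by
    ext j
    induction j using Fin.cases with
    | zero => simp [v, vecMul, dotProduct, Fin.sum_univ_succ, sub_eq_add_neg]
    | succ j =>
      have hsj := congrFun hs j
      simp_all [v, vecMul, dotProduct, Fin.sum_univ_succ]
  have hv0 := congrFun (vecMul_vecMul v A B) 0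
  rw [hvA, hAB, vecMul_one, single_vecMul] at hv0
  simpa [v] using hv0

theorem apply_eq_mul_vecMul_of_succAbove {ι : Type*} [Fintype ι] [DecidableEq ι] {n : ℕ}
    (A : Matrix (Fin (n + 1)) ι R) (C D : Matrix ι (Fin n) R) (k : Fin n)
    (hD : A.submatrix Fin.succ id * D = 1) (hC : C * A.submatrix k.succ.succAbove id = 1)
    (i : ι) : D i k = C i ⟨0, k.pos⟩ * (A 0 ᵥ* D) k := by
  have hcol : (fun j => (A * D) j k) ∘ k.succ.succAbove = Pi.single ⟨0, k.pos⟩ ((A 0 ᵥ* D) k) :=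
    Fin.comp_succAbove_succ_eq_single fun t ht =>
      (congrFun (congrFun hD t) k).trans (one_apply_ne ht)
  calc D i k = (C * (A.submatrix k.succ.succAbove id * D)) i k := by
        rw [← Matrix.mul_assoc, hC, Matrix.one_mul]
    _ = (C *ᵥ Pi.single ⟨0, k.pos⟩ ((A 0 ᵥ* D) k)) i := by rw [← hcol]; rfl
    _ = C i ⟨0, k.pos⟩ * (A 0 ᵥ* D) k := by simp

end Matrix

open Matrix in
theorem stmt14_general {R : Type*} [Ring R] (n : ℕ)
    (A B : Matrix (Fin (n + 1)) (Fin (n + 1)) R)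
    (hAB : A * B = 1)
    (q₀₀ : Rˣ) (hq : ((q₀₀⁻¹ : Rˣ) : R) = B 0 0)
    (Cmat : Fin n → Matrix (Fin n) (Fin n) R)
    (hC : ∀ i : Fin n,
      A.submatrix (Fin.succAbove i.succ) Fin.succ * Cmat i = 1 ∧
      Cmat i * A.submatrix (Fin.succAbove i.succ) Fin.succ = 1)
    (Dmat : Matrix (Fin n) (Fin n) R)
    (hD : A.submatrix Fin.succ Fin.succ * Dmat = 1 ∧
      Dmat * A.submatrix Fin.succ Fin.succ = 1)
    (p : Fin n → Rˣ) (hp : ∀ i : Fin n, (((p i)⁻¹ : Rˣ) : R) = (Cmat i) i ⟨0, i.pos⟩) :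
    (q₀₀ : R) = A 0 0 - ∑ i : Fin n, (p i : R) * Dmat i i * A i.succ 0 := by
  set s : Fin n → R := (fun j => A 0 j.succ) ᵥ* Dmat
  have hs : s ᵥ* A.submatrix Fin.succ Fin.succ = fun j => A 0 j.succ := by
    rw [vecMul_vecMul, hD.2, vecMul_one]
  have hsp : ∀ k, s k = p k * Dmat k k := fun k => (Units.inv_mul_eq_iff_eq_mul _).1 <| by
    rw [hp]
    exact (apply_eq_mul_vecMul_of_succAbove (A.submatrix id Fin.succ) (Cmat k) Dmat k
      hD.1 (hC k).2 k).symm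
  have hq' : A 0 0 - s ⬝ᵥ (fun k => A k.succ 0) = q₀₀ :=
    Units.mul_inv_eq_one.1 (hq ▸ schur_mul_apply_zero_zero_eq_one A B hAB s hs)
  rw [← hq']
  simp [dotProduct, hsp]

/-- column expansion of the quasideterminant: let `A` be an
`(n+1)×(n+1)` matrix over a noncommutative ring, invertible with inverse `B`, so that
the `(0,0)`-quasideterminant of `A` is `|A|₀₀ = (B 0 0)⁻¹ = q₀₀`.  For `1 ≤ i ≤ n` let
`A^{i0}` (resp. `A^{00}`) be the matrix obtained from `A` by deleting the `i`-th
(resp. `0`-th) row and the `0`-th column, with inverse `Cmat i` (resp. `Dmat`), and let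
`p i = |A^{i0}|₀ᵢ` and `r i = |A^{00}|ᵢᵢ` be the corresponding quasideterminants (all
assumed defined and invertible).  Then
`|A|₀₀ = a₀₀ - ∑_{i=1}^n |A^{i0}|₀ᵢ • (|A^{00}|ᵢᵢ)⁻¹ • a_{i0}`. -/
theorem stmt14 {R : Type*} [Ring R] (n : ℕ)
    (A B : Matrix (Fin (n + 1)) (Fin (n + 1)) R)
    (hAB : A * B = 1) (hBA : B * A = 1)
    (q₀₀ : Rˣ) (hq : ((q₀₀⁻¹ : Rˣ) : R) = B 0 0)
    (Cmat : Fin n → Matrix (Fin n) (Fin n) R)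
    (hC : ∀ i : Fin n,
      A.submatrix (Fin.succAbove i.succ) Fin.succ * Cmat i = 1 ∧
      Cmat i * A.submatrix (Fin.succAbove i.succ) Fin.succ = 1)
    (Dmat : Matrix (Fin n) (Fin n) R)
    (hD : A.submatrix Fin.succ Fin.succ * Dmat = 1 ∧
      Dmat * A.submatrix Fin.succ Fin.succ = 1)
    (p : Fin n → Rˣ) (hp : ∀ i : Fin n, (((p i)⁻¹ : Rˣ) : R) = (Cmat i) i ⟨0, i.pos⟩)
    (r : Fin n → Rˣ) (hr : ∀ i : Fin n, (((r i)⁻¹ : Rˣ) : R) = Dmat i i) :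
    (q₀₀ : R) = A 0 0 - ∑ i : Fin n, (p i : R) * Dmat i i * A i.succ 0 :=
  stmt14_general n A B hAB q₀₀ hq Cmat hC Dmat hD p hp
end

section
/- Let C be a smooth projective curve and η₁, η₂, η rational 1-forms (global sections of ω_C) with η ≠ 0, such that the divisor of zeros of η consists of distinct points x₁,…,x_{2g-2} and η₁, η₂ do not vanish identically. Then ∑_{i} η₁(xᵢ)η₂(xᵢ)/η'(xᵢ) = 0, where η'(x) ∈ ω_C²|ₓ denotes the image of η ∈ mₓ·ω_C in (mₓ/mₓ²)⊗ω_C ≅ ω_C²|ₓ, and η₁(x)η₂(x) ∈ ω_C²|ₓ. -/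
/-!
An abstract model of a smooth projective curve over a field `k`, presented through its
function field `K` together with, for each closed point: the order of vanishing of a
rational function, a normalized leading coefficient (with respect to a fixed local
parameter at each point, normalized so that a fixed nonzero rational 1-form `η₀` has
leading coefficient `1` everywhere), and the residue of the rational 1-form `f·η₀`.
The divisor of `η₀` is the canonical divisor `Kdiv`.  Line bundles are presented as
divisors `D : Point →₀ ℤ` (the bundle `O_C(D)`), whose rational sections are rational
functions; `secs D = H⁰(C, O_C(D))` is the usual Riemann-Roch space.
-/

structure AlgCurve (k : Type) [Field k] : Type 1 where
  Point : Type
  K : Type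
  [fieldK : Field K]
  [algK : Algebra k K]
  /-- order of vanishing at a point (junk value at `0`) -/
  ord : Point → K → ℤ
  ord_mul : ∀ (x : Point) (f g : K), f ≠ 0 → g ≠ 0 → ord x (f * g) = ord x f + ord x g
  ord_add : ∀ (x : Point) (f g : K), f ≠ 0 → g ≠ 0 → f + g ≠ 0 →
      min (ord x f) (ord x g) ≤ ord x (f + g)
  ord_algebraMap : ∀ (x : Point) (c : k), c ≠ 0 → ord x (algebraMap k K c) = 0
  finite_ord : ∀ f : K, f ≠ 0 → {x : Point | ord x f ≠ 0}.Finite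
  /-- a principal divisor has degree zero -/
  deg_principal : ∀ f : K, f ≠ 0 → (∑ᶠ x : Point, ord x f) = 0
  /-- normalized leading coefficient of `f` at `x` -/
  lc : Point → K → k
  lc_ne_zero : ∀ (x : Point) (f : K), f ≠ 0 → lc x f ≠ 0
  lc_mul : ∀ (x : Point) (f g : K), lc x (f * g) = lc x f * lc x g
  lc_algebraMap : ∀ (x : Point) (c : k), lc x (algebraMap k K c) = c
  genus : ℕ
  /-- the canonical divisor: the divisor of the fixed nonzero rational 1-form `η₀` -/
  Kdiv : Point →₀ ℤ
  deg_Kdiv : (∑ᶠ x : Point, Kdiv x) = 2 * (genus : ℤ) - 2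
  /-- residue at `x` of the rational 1-form `f·η₀` -/
  res : Point → K → k
  res_add : ∀ (x : Point) (f g : K), res x (f + g) = res x f + res x g
  res_smul : ∀ (x : Point) (c : k) (f : K), res x (algebraMap k K c * f) = c * res x f
  res_of_nonneg : ∀ (x : Point) (f : K), f ≠ 0 → 0 ≤ ord x f + Kdiv x → res x f = 0
  /-- at a simple pole of the 1-form `f·η₀` the residue is the leading coefficient -/
  res_simple : ∀ (x : Point) (f : K), f ≠ 0 → ord x f + Kdiv x = -1 → res x f = lc x f
  /-- the residue theorem: the sum of the residues of a rational 1-form vanishes -/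
  residue_theorem : ∀ f : K, (∑ᶠ x : Point, res x f) = 0

attribute [instance] AlgCurve.fieldK AlgCurve.algK

namespace AlgCurve

open scoped Classical

variable {k : Type} [Field k] (C : AlgCurve k)

/-- the space of global sections `H⁰(C, O_C(D))` -/
def secs (D : C.Point →₀ ℤ) : Submodule k C.K where
  carrier := {f | f = 0 ∨ ∀ x, 0 ≤ C.ord x f + D x}
  zero_mem' := Or.inl rfl
  add_mem' := by
    intro a b ha hb
    by_cases ha0 : a = 0
    · simpa [ha0] using hb
    by_cases hb0 : b = 0
    · simpa [hb0] using ha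
    rcases ha with rfl | ha
    · exact absurd rfl ha0
    rcases hb with rfl | hb
    · exact absurd rfl hb0
    by_cases hab : a + b = 0
    · exact Or.inl hab
    refine Or.inr fun x => ?_
    have hmin := C.ord_add x a b ha0 hb0 hab
    have h1 := ha x
    have h2 := hb x
    rcases min_choice (C.ord x a) (C.ord x b) with h | h <;> rw [h] at hmin <;> omega
  smul_mem' := by
    intro c f hf
    by_cases hc : c = 0
    · exact Or.inl (by simp [hc])
    by_cases hf0 : f = 0
    · exact Or.inl (by simp [hf0])
    rcases hf with rfl | hf
    · exact absurd rfl hf0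
    refine Or.inr fun x => ?_
    have hsmul : c • f = algebraMap k C.K c * f := Algebra.smul_def c f
    have hcK : algebraMap k C.K c ≠ 0 := by
      simpa using (map_ne_zero (algebraMap k C.K)).mpr hc
    rw [hsmul, C.ord_mul x _ f hcK hf0, C.ord_algebraMap x c hc]
    simpa using hf x

/-- `h⁰(C, O_C(D))` -/
noncomputable def h0 (D : C.Point →₀ ℤ) : ℕ := Module.finrank k (C.secs D)

/-- the degree of a divisor -/
def degDiv (D : C.Point →₀ ℤ) : ℤ := D.sum fun _ n => n

/-- the value at `y` of `f`, regarded as a rational section of `O_C(D)`, in the fiber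
`O_C(D)|_y` trivialized by the canonical rational section of `O_C(D)` -/
noncomputable def secVal (D : C.Point →₀ ℤ) (y : C.Point) (f : C.K) : k :=
  if f ≠ 0 ∧ C.ord y f + D y = 0 then C.lc y f else 0

/-- `y` is a base point of `O_C(D)`: every global section vanishes at `y` -/
def IsBasePoint (D : C.Point →₀ ℤ) (y : C.Point) : Prop :=
  ∀ f ∈ C.secs D, C.secVal D y f = 0

/-- `(O_C(D), x, y)` is a good triple: `x ≠ y`, `x` is a base point of `ω_C(-D)` and
`y` is a base point of `O_C(D)` -/
def GoodTriple (D : C.Point →₀ ℤ) (x y : C.Point) : Prop :=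
  x ≠ y ∧ C.IsBasePoint (C.Kdiv - D) x ∧ C.IsBasePoint D y

/-- The triple Massey product `m₃(O_C(D), x, y) ∈ (ω_C(-D))|_x ⊗ O_C(D)|_y`, written in
the canonical trivializations of the fibers: choose a rational section `s` of `O_C(D)`
with a first-order pole at `x` and no other poles (i.e. `f ∈ H⁰(O(D+x)) \ H⁰(O(D))`) and
form `s(y)/Res_x(s)`. -/
noncomputable def m3 (D : C.Point →₀ ℤ) (x y : C.Point) : k :=
  if h : ∃ f, f ∈ C.secs (D + Finsupp.single x 1) ∧ f ∉ C.secs D then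
    C.secVal D y h.choose / C.secVal (D + Finsupp.single x 1) x h.choose
  else 0

end AlgCurve

/-!
The rational 1-form `η₁η₂/η` is `(g₁g₂/f)·η₀`. Away from the zeros of `η` it is regular,
and at a simple zero `x` of `η` it has at worst a simple pole, with residue
`η₁(x)η₂(x)/η'(x)`. The identity is the residue theorem for this form.
-/

namespace AlgCurve

variable {k : Type} [Field k] (C : AlgCurve k)

theorem ord_one (x : C.Point) : C.ord x 1 = 0 := by
  simpa using C.ord_algebraMap x 1 one_ne_zero

theorem lc_one (x : C.Point) : C.lc x 1 = 1 := by
  simpa using C.lc_algebraMap x 1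

theorem ord_inv (x : C.Point) {f : C.K} (hf : f ≠ 0) : C.ord x f⁻¹ = -C.ord x f := by
  have h := C.ord_mul x f f⁻¹ hf (inv_ne_zero hf)
  rw [mul_inv_cancel₀ hf, ord_one] at h
  omega

theorem lc_inv (x : C.Point) {f : C.K} (hf : f ≠ 0) : C.lc x f⁻¹ = (C.lc x f)⁻¹ := by
  have h := C.lc_mul x f f⁻¹
  rw [mul_inv_cancel₀ hf, lc_one] at h
  exact (inv_eq_of_mul_eq_one_right h.symm).symm

theorem ord_mul_mul_inv (x : C.Point) {f g₁ g₂ : C.K} (hf : f ≠ 0) (hg₁ : g₁ ≠ 0)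
    (hg₂ : g₂ ≠ 0) : C.ord x (g₁ * g₂ * f⁻¹) = C.ord x g₁ + C.ord x g₂ - C.ord x f := by
  rw [C.ord_mul x _ _ (mul_ne_zero hg₁ hg₂) (inv_ne_zero hf), C.ord_mul x _ _ hg₁ hg₂,
    C.ord_inv x hf]
  ring

theorem secVal_of_ord_add_eq_zero {D : C.Point →₀ ℤ} {x : C.Point} {g : C.K} (hg : g ≠ 0)
    (h : C.ord x g + D x = 0) : C.secVal D x g = C.lc x g := by
  simp [secVal, hg, h]

theorem secVal_of_ord_add_ne_zero {D : C.Point →₀ ℤ} {x : C.Point} {g : C.K}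
    (h : C.ord x g + D x ≠ 0) : C.secVal D x g = 0 := by
  simp [secVal, h]

theorem res_mul_mul_inv_of_ord_add_nonpos {x : C.Point} {f g₁ g₂ : C.K} (hf : f ≠ 0)
    (hg₁ : g₁ ≠ 0) (hg₂ : g₂ ≠ 0) (h₁ : 0 ≤ C.ord x g₁ + C.Kdiv x)
    (h₂ : 0 ≤ C.ord x g₂ + C.Kdiv x) (hx : C.ord x f + C.Kdiv x ≤ 0) :
    C.res x (g₁ * g₂ * f⁻¹) = 0 := by
  refine C.res_of_nonneg x _ (mul_ne_zero (mul_ne_zero hg₁ hg₂) (inv_ne_zero hf)) ?_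
  rw [C.ord_mul_mul_inv x hf hg₁ hg₂]
  omega

theorem res_mul_mul_inv_of_ord_add_eq_one {x : C.Point} {f g₁ g₂ : C.K} (hf : f ≠ 0)
    (hg₁ : g₁ ≠ 0) (hg₂ : g₂ ≠ 0) (h₁ : 0 ≤ C.ord x g₁ + C.Kdiv x)
    (h₂ : 0 ≤ C.ord x g₂ + C.Kdiv x) (hx : C.ord x f + C.Kdiv x = 1) :
    C.res x (g₁ * g₂ * f⁻¹) = C.secVal C.Kdiv x g₁ * C.secVal C.Kdiv x g₂ / C.lc x f := by
  have hord := C.ord_mul_mul_inv x hf hg₁ hg₂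
  by_cases hpole : C.ord x g₁ + C.Kdiv x = 0 ∧ C.ord x g₂ + C.Kdiv x = 0
  · rw [C.res_simple x _ (mul_ne_zero (mul_ne_zero hg₁ hg₂) (inv_ne_zero hf)) (by omega),
      C.lc_mul, C.lc_mul, C.lc_inv x hf, C.secVal_of_ord_add_eq_zero hg₁ hpole.1,
      C.secVal_of_ord_add_eq_zero hg₂ hpole.2, div_eq_mul_inv]
  · have hvanish : C.secVal C.Kdiv x g₁ * C.secVal C.Kdiv x g₂ = 0 := by
      rcases not_and_or.mp hpole with h | h
      · rw [C.secVal_of_ord_add_ne_zero h, zero_mul]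
      · rw [C.secVal_of_ord_add_ne_zero h, mul_zero]
    rw [hvanish, zero_div]
    refine C.res_of_nonneg x _ (mul_ne_zero (mul_ne_zero hg₁ hg₂) (inv_ne_zero hf)) ?_
    omega

end AlgCurve

open scoped Classical

/-- Encoding: `η = f·η₀`, `ηᵢ = gᵢ·η₀`, the zeros of `η` are `S`; `ηᵢ(x) = secVal Kdiv x gᵢ`
and `η'(x) = lc x f` in the normalized trivializations. -/
theorem stmt17_general {k : Type} [Field k] (C : AlgCurve k)
    (f g₁ g₂ : C.K) (hf : f ≠ 0) (hg₁ : g₁ ≠ 0) (hg₂ : g₂ ≠ 0)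
    (hg₁glob : ∀ p : C.Point, 0 ≤ C.ord p g₁ + C.Kdiv p)
    (hg₂glob : ∀ p : C.Point, 0 ≤ C.ord p g₂ + C.Kdiv p)
    (S : Finset C.Point)
    (hzeros : ∀ p : C.Point, C.ord p f + C.Kdiv p = if p ∈ S then 1 else 0) :
    ∑ p ∈ S, C.secVal C.Kdiv p g₁ * C.secVal C.Kdiv p g₂ / C.lc p f = 0 := by
  have hres_off : ∀ p ∉ S, C.res p (g₁ * g₂ * f⁻¹) = 0 := fun p hp =>
    C.res_mul_mul_inv_of_ord_add_nonpos hf hg₁ hg₂ (hg₁glob p) (hg₂glob p)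
      (by rw [hzeros p, if_neg hp])
  have hres_on : ∀ p ∈ S, C.res p (g₁ * g₂ * f⁻¹) =
      C.secVal C.Kdiv p g₁ * C.secVal C.Kdiv p g₂ / C.lc p f := fun p hp =>
    C.res_mul_mul_inv_of_ord_add_eq_one hf hg₁ hg₂ (hg₁glob p) (hg₂glob p)
      (by rw [hzeros p, if_pos hp])
  rw [← C.residue_theorem (g₁ * g₂ * f⁻¹),
    finsum_eq_sum_of_support_subset _ (Function.support_subset_iff'.mpr hres_off)]
  exact (Finset.sum_congr rfl hres_on).symm

/-- if `η = f·η₀` is a nonzero global 1-form whose zero divisor consists of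
`2g-2` distinct points (the finset `S`), and `η₁ = g₁·η₀`, `η₂ = g₂·η₀` are global
1-forms not vanishing identically, then `∑_{x ∈ S} η₁(x)η₂(x)/η'(x) = 0`, where (in the
normalized trivializations) `ηᵢ(x) = secVal Kdiv x gᵢ ∈ ω_C|ₓ` and `η'(x) = lc x f` is
the image of `η ∈ mₓ·ω_C` in `(mₓ/mₓ²) ⊗ ω_C ≅ ω_C²|ₓ`. -/
theorem stmt17 {k : Type} [Field k] (C : AlgCurve k)
    (f g₁ g₂ : C.K) (hf : f ≠ 0) (hg₁ : g₁ ≠ 0) (hg₂ : g₂ ≠ 0)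
    (hg₁glob : ∀ p : C.Point, 0 ≤ C.ord p g₁ + C.Kdiv p)
    (hg₂glob : ∀ p : C.Point, 0 ≤ C.ord p g₂ + C.Kdiv p)
    (S : Finset C.Point) (hcard : S.card = 2 * C.genus - 2)
    (hzeros : ∀ p : C.Point, C.ord p f + C.Kdiv p = if p ∈ S then 1 else 0) :
    ∑ p ∈ S, C.secVal C.Kdiv p g₁ * C.secVal C.Kdiv p g₂ / C.lc p f = 0 :=
  stmt17_general C f g₁ g₂ hf hg₁ hg₂ hg₁glob hg₂glob S hzeros
end
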